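/- arXiv:2411.15599 — 4 statements merged into one kernel-verified Lean document; each statement's English description precedes it below -/
import Mathlib

section
/- The monic matrix polynomial D(λ) = λ² I + N, with N = [[0,1],[0,0]], is irreducible in the sense that there do not exist 2×2 complex matrices B and C with λ² I + N = (λ I − C)(λ I − B) for all λ ∈ ℂ. The same holds with N replaced by P N P⁻¹ for any invertible P. -/
/-! Evaluating `λ² + A = (λ - C)(λ - B)` at `λ = 0` and `λ = 1` gives `A = CB` and `C = -B`,
so `-A = B²`. A square root of a nilpotent matrix is nilpotent, and a nilpotent matrix of size
at most `2` squares to zero (Cayley–Hamilton), so then `A = -B² = 0`. -/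

open Matrix Polynomial

theorem sq_eq_neg_of_forall_smul_one_sub_mul_smul_one_sub {R A : Type*} [CommRing R] [Ring A]
    [Module R A] {B C D : A}
    (h : ∀ lam : R, lam ^ 2 • (1 : A) + D = (lam • 1 - C) * (lam • 1 - B)) :
    B ^ 2 = -D := by
  have hD : D = C * B := by simpa using h 0
  have hCB : C = -B := by
    have h1 := h 1
    rw [one_pow, one_smul, hD,
      show (1 - C) * (1 - B) = 1 + C * B - (B + C) by noncomm_ring, eq_comm, sub_eq_self] at h1
    exact eq_neg_of_add_eq_zero_right h1
  rw [hD, hCB, neg_mul, neg_neg, sq]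

theorem Matrix.pow_card_eq_zero_of_isNilpotent {n K : Type*} [Fintype n] [DecidableEq n]
    [CommRing K] [IsReduced K] {M : Matrix n n K} (hM : IsNilpotent M) :
    M ^ Fintype.card n = 0 := by
  have hχ : M.charpoly = X ^ Fintype.card n := by
    rw [← sub_eq_zero]
    ext k
    exact (Polynomial.isNilpotent_iff.mp (isNilpotent_charpoly_sub_pow_of_isNilpotent hM) k).eq_zero
  simpa [hχ] using M.aeval_self_charpoly

theorem Matrix.eq_zero_of_isNilpotent_of_sq_eq {n K : Type*} [Fintype n] [DecidableEq n]
    [CommRing K] [IsReduced K] (hn : Fintype.card n ≤ 2) {A B : Matrix n n K}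
    (hA : IsNilpotent A) (hB : B ^ 2 = A) : A = 0 := by
  have hBnil : IsNilpotent B := IsNilpotent.of_pow (hB ▸ hA)
  rw [← hB]
  exact pow_eq_zero_of_le hn (pow_card_eq_zero_of_isNilpotent hBnil)

theorem Matrix.not_exists_monic_linear_factorization_of_isNilpotent {n K : Type*} [Fintype n]
    [DecidableEq n] [CommRing K] [IsReduced K] (hn : Fintype.card n ≤ 2) {A : Matrix n n K}
    (hA : IsNilpotent A) (hA0 : A ≠ 0) :
    ¬ ∃ B C : Matrix n n K, ∀ lam : K,
      lam ^ 2 • (1 : Matrix n n K) + A = (lam • 1 - C) * (lam • 1 - B) := by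
  rintro ⟨B, C, h⟩
  exact hA0 (neg_eq_zero.mp (eq_zero_of_isNilpotent_of_sq_eq hn hA.neg
    (sq_eq_neg_of_forall_smul_one_sub_mul_smul_one_sub h)))

theorem stmt8 :
    (¬ ∃ B C : Matrix (Fin 2) (Fin 2) ℂ, ∀ lam : ℂ,
        lam ^ 2 • (1 : Matrix (Fin 2) (Fin 2) ℂ) + !![0, 1; 0, 0]
          = (lam • (1 : Matrix (Fin 2) (Fin 2) ℂ) - C) *
              (lam • (1 : Matrix (Fin 2) (Fin 2) ℂ) - B)) ∧
    ∀ P : Matrix (Fin 2) (Fin 2) ℂ, IsUnit P.det →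
      ¬ ∃ B C : Matrix (Fin 2) (Fin 2) ℂ, ∀ lam : ℂ,
        lam ^ 2 • (1 : Matrix (Fin 2) (Fin 2) ℂ) + P * !![0, 1; 0, 0] * P⁻¹
          = (lam • (1 : Matrix (Fin 2) (Fin 2) ℂ) - C) *
              (lam • (1 : Matrix (Fin 2) (Fin 2) ℂ) - B) := by
  set N : Matrix (Fin 2) (Fin 2) ℂ := !![0, 1; 0, 0]
  have hN2 : N ^ 2 = 0 := by
    ext i j
    fin_cases i <;> fin_cases j <;> simp [N, sq]
  have hN0 : N ≠ 0 := fun h => by simpa [N] using congrFun (congrFun h 0) 1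
  have hcard : Fintype.card (Fin 2) ≤ 2 := (Fintype.card_fin 2).le
  refine ⟨not_exists_monic_linear_factorization_of_isNilpotent hcard ⟨2, hN2⟩ hN0,
    fun P hP => ?_⟩
  let u := P.nonsingInvUnit hP
  have hconj : P * N * P⁻¹ = u * N * (↑(u⁻¹) : Matrix (Fin 2) (Fin 2) ℂ) := rfl
  refine not_exists_monic_linear_factorization_of_isNilpotent hcard ⟨2, ?_⟩ ?_
  · rw [hconj, Units.conj_pow, hN2, mul_zero, zero_mul]
  · rwa [hconj, Ne, Units.mul_left_eq_zero, Units.mul_right_eq_zero]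
end

section
/- The function u(x,t) = −2i/(i + 2x) is a solution of the x-nonlocal focusing NLS equation i u_t = u_{xx} + 2 u² û, where û(x,t) = conj(u(−x,t)); moreover its denominator i + 2x never vanishes for real x, so u is globally defined on ℝ². -/
/-!
The solution does not depend on `t` and is PT-symmetric, `conj (u (-x)) = u x`, so the
equation reduces to the ODE `u'' + 2 u³ = 0`. With `u = -2i/(i + 2x)` one finds
`u'' = -16i/(i + 2x)³` and `2u³ = 16i/(i + 2x)³`.
-/

noncomputable def u11 (x t : ℝ) : ℂ := (-2 * Complex.I) / (Complex.I + 2 * (x : ℂ))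

open Complex

lemma I_add_two_mul_ofReal_ne_zero (x : ℝ) : I + 2 * (x : ℂ) ≠ 0 := fun h => by
  simpa using congrArg Complex.im h

lemma hasDerivAt_div_affine_pow (a b c : ℂ) (n : ℕ) {x : ℝ} (hx : c + b * x ≠ 0) :
    HasDerivAt (fun y : ℝ => a / (c + b * y) ^ n)
      (-(n * b * a) / (c + b * x) ^ (n + 1)) x := by
  have hlin : HasDerivAt (fun y : ℝ => c + b * (y : ℂ)) b x := by
    simpa using ((hasDerivAt_id x).ofReal_comp.const_mul b).const_add c
  have hpow : HasDerivAt (fun y : ℝ => (c + b * (y : ℂ)) ^ n)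
      (n * (c + b * x) ^ (n - 1) * b) x := hlin.pow n
  refine ((hasDerivAt_const x a).div hpow (pow_ne_zero n hx)).congr_deriv ?_
  rcases n with _ | n
  · simp
  · field_simp
    push_cast
    ring

lemma deriv_u11_time (x t : ℝ) : deriv (fun t' => u11 x t') t = 0 :=
  deriv_const t _

lemma iteratedDeriv_two_u11_space (x t : ℝ) :
    iteratedDeriv 2 (fun x' => u11 x' t) x = -16 * I / (I + 2 * (x : ℂ)) ^ 3 := by
  have hu : (fun x' : ℝ => u11 x' t) = fun x' : ℝ => -2 * I / (I + 2 * (x' : ℂ)) ^ 1 := by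
    simp only [u11, pow_one]
  have hu' : deriv (fun x' => u11 x' t) = fun x' : ℝ => 4 * I / (I + 2 * (x' : ℂ)) ^ 2 := by
    funext y
    rw [hu, (hasDerivAt_div_affine_pow _ _ _ 1 (I_add_two_mul_ofReal_ne_zero y)).deriv]
    ring
  rw [iteratedDeriv_succ, iteratedDeriv_one, hu',
    (hasDerivAt_div_affine_pow _ _ _ 2 (I_add_two_mul_ofReal_ne_zero x)).deriv]
  ring

lemma conj_u11_neg (x t : ℝ) : (starRingEnd ℂ) (u11 (-x) t) = u11 x t := by
  have hne : I + 2 * (x : ℂ) ≠ 0 := I_add_two_mul_ofReal_ne_zero x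
  have hne' : -I + 2 * ((-x : ℝ) : ℂ) ≠ 0 := by
    rw [← neg_ne_zero]; push_cast; convert hne using 1; ring
  simp only [u11, map_div₀, map_mul, map_neg, map_add, conj_I, map_ofNat, conj_ofReal]
  rw [div_eq_div_iff hne' hne]
  push_cast
  ring

theorem stmt11 :
    (∀ x : ℝ, Complex.I + 2 * (x : ℂ) ≠ 0) ∧
    ∀ x t : ℝ,
      Complex.I * deriv (fun t' => u11 x t') t =
        iteratedDeriv 2 (fun x' => u11 x' t) x
          + 2 * (u11 x t) ^ 2 * (starRingEnd ℂ) (u11 (-x) t) := by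
  refine ⟨I_add_two_mul_ofReal_ne_zero, fun x t => ?_⟩
  rw [deriv_u11_time, iteratedDeriv_two_u11_space, conj_u11_neg, u11]
  have hne := I_add_two_mul_ofReal_ne_zero x
  field_simp
  linear_combination 16 * I_sq
end

section
/- Let Γ be an n×n complex matrix satisfying Γ + Γ̂ = 0, where Γ̂ is defined entrywise by Γ̂_{pq}(x,t) = conj(Γ_{qp}(−x,t)). Then the quantities ũ(x,t) = 2 l₁ Γ⁻¹ r₂ and ṽ(x,t) = −2 l₂ Γ⁻¹ r₁ satisfy ṽ(x,t) = −conj(ũ(−x,t)) provided l₁(x,t) = conj(r₁(−x,t))ᵀ and l₂(x,t) = −conj(r₂(−x,t))ᵀ. In particular, the antisymmetry Γ(x,t) = −Γ*(−x,t) of the Γ matrix implies the nonlocal symmetry reduction ũ(x,t) + conj(ṽ(−x,t)) = 0 of the constructed solutions. -/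
open Matrix

theorem stmt17 (n : ℕ) (Γ : ℝ → ℝ → Matrix (Fin n) (Fin n) ℂ)
    (l₁ l₂ : ℝ → ℝ → Matrix (Fin 1) (Fin n) ℂ)
    (r₁ r₂ : ℝ → ℝ → Matrix (Fin n) (Fin 1) ℂ)
    (hΓinv : ∀ x t, IsUnit (Γ x t).det)
    (hΓ : ∀ x t, Γ x t + (Γ (-x) t).conjTranspose = 0)
    (hl₁ : ∀ x t, l₁ x t = (r₁ (-x) t).conjTranspose)
    (hl₂ : ∀ x t, l₂ x t = -(r₂ (-x) t).conjTranspose)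
    (u v : ℝ → ℝ → ℂ)
    (hu : ∀ x t, u x t = 2 * ((l₁ x t * (Γ x t)⁻¹ * r₂ x t) 0 0))
    (hv : ∀ x t, v x t = -2 * ((l₂ x t * (Γ x t)⁻¹ * r₁ x t) 0 0)) :
    ∀ x t, v x t = -(starRingEnd ℂ) (u (-x) t) ∧
      u x t + (starRingEnd ℂ) (v (-x) t) = 0 := by
  have key : ∀ x t, v x t = -(starRingEnd ℂ) (u (-x) t) := by
    intro x t
    have hΓH : (Γ (-x) t).conjTranspose = -(Γ x t) := by
      have h := hΓ x t
      have : (Γ (-x) t).conjTranspose = -(Γ x t) + (Γ x t + (Γ (-x) t).conjTranspose) := by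
        abel
      rw [this, h, add_zero]
    have hneg : (-(Γ x t))⁻¹ = -(Γ x t)⁻¹ := by
      apply Matrix.inv_eq_right_inv
      rw [Matrix.neg_mul, Matrix.mul_neg, neg_neg, Matrix.mul_nonsing_inv _ (hΓinv x t)]
    have hinv : ((Γ (-x) t)⁻¹).conjTranspose = -(Γ x t)⁻¹ := by
      rw [Matrix.conjTranspose_nonsing_inv, hΓH, hneg]
    have hl1 : (l₁ (-x) t).conjTranspose = r₁ x t := by
      rw [hl₁, neg_neg, Matrix.conjTranspose_conjTranspose]
    have hr2 : (r₂ (-x) t).conjTranspose = -(l₂ x t) := by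
      rw [hl₂, neg_neg]
    have hc : (starRingEnd ℂ) ((l₁ (-x) t * (Γ (-x) t)⁻¹ * r₂ (-x) t) 0 0)
        = ((l₁ (-x) t * (Γ (-x) t)⁻¹ * r₂ (-x) t).conjTranspose) 0 0 := by
      rw [Matrix.conjTranspose_apply]; rfl
    rw [hv, hu, _root_.map_mul, hc, Matrix.conjTranspose_mul, Matrix.conjTranspose_mul,
      hl1, hr2, hinv]
    have hM : (-l₂ x t) * (-(Γ x t)⁻¹ * r₁ x t) = l₂ x t * (Γ x t)⁻¹ * r₁ x t := by
      simp [Matrix.neg_mul, Matrix.mul_neg, Matrix.mul_assoc]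
    rw [hM, show ((starRingEnd ℂ) 2 : ℂ) = 2 from map_ofNat _ 2]
    ring
  intro x t
  refine ⟨key x t, ?_⟩
  rw [key (-x) t, neg_neg, map_neg, Complex.conj_conj]
  ring
end

section
/- Suppose a : ℂ → ℂ^{1×2} and b : ℂ → ℂ^{2×1} are analytic at λ₀, with a(λ₀)b(λ₀) = 0 and a(λ₀)b'(λ₀) ≠ 0, and suppose b satisfies bₓ = U(λ)b and a satisfies aₓ = −aU(λ) for a matrix polynomial U(λ) (with coefficients depending smoothly on x). Let A = b(λ₀)·(a(λ₀)b'(λ₀))⁻¹·a(λ₀). Then A satisfies the matrix Riccati-type equation Aₓ = U₀A − AU₀ − AU₀'A, where U₀ = U(λ₀) and U₀' = (∂U/∂λ)(λ₀); consequently AₓA + AU₀A = 0. -/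
/-!
Write `Γ = a₀ b₁` and `P = b₀ a₀`, so that `A = Γ⁻¹ P`. In `Γ' = -a₀ U₀ b₁ + a₀ (U₀' b₀ + U₀ b₁)`
the `U₀`-terms cancel, leaving `Γ' = a₀ U₀' b₀`, while `P' = U₀ P - P U₀`. Since `a₀ U₀' b₀` is a
`1 × 1` matrix, `A U₀' A = Γ⁻² b₀ (a₀ U₀' b₀) a₀ = Γ⁻² Γ' P`, which is exactly the term produced by
differentiating `Γ⁻¹`. Finally `a₀ b₀ = 0` gives `A² = 0`, from which `Aₓ A + A U₀ A = 0` follows.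
-/

open Matrix

def HasEntrywiseDerivAt {𝕜 𝔸 m n : Type*} [NontriviallyNormedField 𝕜] [NormedRing 𝔸]
    [NormedAlgebra 𝕜 𝔸] (M : 𝕜 → Matrix m n 𝔸) (M' : Matrix m n 𝔸) (x : 𝕜) : Prop :=
  ∀ i j, HasDerivAt (fun y => M y i j) (M' i j) x

namespace HasEntrywiseDerivAt

variable {𝕜 𝔸 l m n : Type*} [NontriviallyNormedField 𝕜] [NormedRing 𝔸] [NormedAlgebra 𝕜 𝔸]
  {x : 𝕜}

theorem mul [Fintype m] {M : 𝕜 → Matrix l m 𝔸} {N : 𝕜 → Matrix m n 𝔸} {M' : Matrix l m 𝔸}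
    {N' : Matrix m n 𝔸} (hM : HasEntrywiseDerivAt M M' x) (hN : HasEntrywiseDerivAt N N' x) :
    HasEntrywiseDerivAt (fun y => M y * N y) (M' * N x + M x * N') x := by
  intro i k
  simp only [Matrix.add_apply, mul_apply, ← Finset.sum_add_distrib]
  exact HasDerivAt.fun_sum fun j _ => (hM i j).fun_mul (hN j k)

theorem smul {c : 𝕜 → 𝔸} {c' : 𝔸} {M : 𝕜 → Matrix m n 𝔸} {M' : Matrix m n 𝔸}
    (hc : HasDerivAt c c' x) (hM : HasEntrywiseDerivAt M M' x) :
    HasEntrywiseDerivAt (fun y => c y • M y) (c' • M x + c x • M') x := fun i j =>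
  hc.fun_mul (hM i j)

theorem of_fin_one {M : 𝕜 → Matrix m (Fin 1) 𝔸} {M' : Matrix m (Fin 1) 𝔸}
    (hM : ∀ i, HasDerivAt (fun y => M y i 0) (M' i 0) x) : HasEntrywiseDerivAt M M' x :=
  fun i j => Fin.fin_one_eq_zero j ▸ hM i

theorem adjoint_mul [Fintype n] {a : 𝕜 → Matrix m n 𝔸} {b : 𝕜 → Matrix n m 𝔸} {U : Matrix n n 𝔸}
    {F : Matrix n m 𝔸} (ha : HasEntrywiseDerivAt a (-(a x * U)) x)
    (hb : HasEntrywiseDerivAt b (F + U * b x) x) :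
    HasEntrywiseDerivAt (fun y => a y * b y) (a x * F) x := by
  convert ha.mul hb using 1
  simp only [Matrix.mul_add, Matrix.neg_mul, Matrix.mul_assoc]
  abel

theorem mul_adjoint [Fintype m] [Fintype n] {b : 𝕜 → Matrix n m 𝔸} {a : 𝕜 → Matrix m n 𝔸}
    {U : Matrix n n 𝔸} (hb : HasEntrywiseDerivAt b (U * b x) x)
    (ha : HasEntrywiseDerivAt a (-(a x * U)) x) :
    HasEntrywiseDerivAt (fun y => b y * a y) (U * (b x * a x) - b x * a x * U) x := by
  convert hb.mul ha using 1
  simp only [Matrix.mul_neg, Matrix.mul_assoc, sub_eq_add_neg]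

end HasEntrywiseDerivAt

theorem Matrix.mul_mul_fin_one {R l n : Type*} [CommSemiring R] (b : Matrix l (Fin 1) R)
    (M : Matrix (Fin 1) (Fin 1) R) (a : Matrix (Fin 1) n R) : b * M * a = M 0 0 • (b * a) := by
  ext i j
  simp [mul_apply, mul_left_comm, mul_comm]

theorem Matrix.riccati_of_rank_one {K n : Type*} [Field K] [Fintype n] (Γ : K)
    (U V : Matrix n n K) (b : Matrix n (Fin 1) K) (a : Matrix (Fin 1) n K) :
    (-(a * (V * b)) 0 0 / Γ ^ 2) • (b * a) + Γ⁻¹ • (U * (b * a) - b * a * U)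
      = U * (Γ⁻¹ • (b * a)) - Γ⁻¹ • (b * a) * U - Γ⁻¹ • (b * a) * V * (Γ⁻¹ • (b * a)) := by
  have hAVA : Γ⁻¹ • (b * a) * V * (Γ⁻¹ • (b * a)) = Γ⁻¹ • Γ⁻¹ • (a * (V * b)) 0 0 • (b * a) := by
    rw [← mul_mul_fin_one]
    simp only [Matrix.smul_mul, Matrix.mul_smul, Matrix.mul_assoc]
  rw [hAVA]
  simp only [Matrix.mul_smul, Matrix.smul_mul, Matrix.mul_assoc]
  module

theorem stmt19 (U₀ U₀' : ℝ → Matrix (Fin 2) (Fin 2) ℂ)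
    (a₀ : ℝ → Matrix (Fin 1) (Fin 2) ℂ) (b₀ b₁ : ℝ → Matrix (Fin 2) (Fin 1) ℂ)
    (hab : ∀ x, a₀ x * b₀ x = 0)
    (hΓ : ∀ x, (a₀ x * b₁ x) 0 0 ≠ 0)
    (hb₀ : ∀ x i, HasDerivAt (fun y => b₀ y i 0) ((U₀ x * b₀ x) i 0) x)
    (ha₀ : ∀ x j, HasDerivAt (fun y => a₀ y 0 j) ((-(a₀ x * U₀ x)) 0 j) x)
    (hb₁ : ∀ x i, HasDerivAt (fun y => b₁ y i 0) ((U₀' x * b₀ x + U₀ x * b₁ x) i 0) x)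
    (A : ℝ → Matrix (Fin 2) (Fin 2) ℂ)
    (hA : ∀ x, A x = ((a₀ x * b₁ x) 0 0)⁻¹ • (b₀ x * a₀ x)) :
    ∀ x, (∀ i j, HasDerivAt (fun y => A y i j)
        ((U₀ x * A x - A x * U₀ x - A x * U₀' x * A x) i j) x) ∧
      (U₀ x * A x - A x * U₀ x - A x * U₀' x * A x) * A x + A x * U₀ x * A x = 0 := by
  intro x
  have ha : HasEntrywiseDerivAt a₀ (-(a₀ x * U₀ x)) x := fun i j =>
    Fin.fin_one_eq_zero i ▸ ha₀ x j
  have hΓ' := (ha.adjoint_mul (HasEntrywiseDerivAt.of_fin_one (hb₁ x))) 0 0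
  have hP := (HasEntrywiseDerivAt.of_fin_one (hb₀ x)).mul_adjoint ha
  have hA' : HasEntrywiseDerivAt A (U₀ x * A x - A x * U₀ x - A x * U₀' x * A x) x := by
    simp only [show A = _ from funext hA]
    rw [← riccati_of_rank_one]
    exact HasEntrywiseDerivAt.smul (hΓ'.fun_inv (hΓ x)) hP
  have hA_sq : A x * A x = 0 := by
    rw [hA, smul_mul_smul_comm, Matrix.mul_assoc, ← Matrix.mul_assoc (a₀ x), hab,
      Matrix.zero_mul, Matrix.mul_zero, smul_zero]
  refine ⟨hA', ?_⟩
  calc _ = U₀ x * (A x * A x) - A x * U₀' x * (A x * A x) := by noncomm_ring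
    _ = 0 := by rw [hA_sq, mul_zero, mul_zero, sub_zero]
end
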